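/- arXiv:2303.05784 — 4 statements merged into one kernel-verified Lean document; each statement's English description precedes it below -/
import Mathlib

section
/- The space of polynomials $\mathcal{P}_3$ of total degree at most 3 in $n$ variables is contained in the Morley-type shape function space $\mathcal{P}_M = Q_1 \cdot \operatorname{span}\{1, x_i^2 \mid 1\le i\le n\} + \operatorname{span}\{x_i^4, x_i^5 \mid 1\le i\le n\}$. -/
open MvPolynomial

/-- `Q1`: span of the multilinear monomials (each exponent at most 1). -/
noncomputable def Q1 (n : ℕ) : Submodule ℝ (MvPolynomial (Fin n) ℝ) :=
  Submodule.span ℝ {p | ∃ α : Fin n →₀ ℕ, (∀ i, α i ≤ 1) ∧ p = monomial α (1 : ℝ)}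

/-- `A · B`: the span of products of elements of `A` and `B`. -/
noncomputable def prodSpan {n : ℕ} (A B : Submodule ℝ (MvPolynomial (Fin n) ℝ)) :
    Submodule ℝ (MvPolynomial (Fin n) ℝ) :=
  Submodule.span ℝ {p | ∃ a ∈ A, ∃ b ∈ B, p = a * b}

/-- Morley-type shape function space
`P_M = Q1 · span{1, x_i^2} + span{x_i^4, x_i^5}`. -/
noncomputable def PM (n : ℕ) : Submodule ℝ (MvPolynomial (Fin n) ℝ) :=
  prodSpan (Q1 n) (Submodule.span ℝ ({1} ∪ {p | ∃ i : Fin n, p = X i ^ 2})) ⊔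
    Submodule.span ℝ {p | ∃ i : Fin n, p = X i ^ 4 ∨ p = X i ^ 5}

lemma monomial_mem_PM (n : ℕ) (α : Fin n →₀ ℕ) (c : ℝ) (hα : (∑ j, α j) ≤ 3) :
    (monomial α c : MvPolynomial (Fin n) ℝ) ∈ PM n := by
  have hc : (monomial α c : MvPolynomial (Fin n) ℝ) = c • monomial α (1 : ℝ) := by
    simp [smul_monomial]
  rw [hc]
  apply Submodule.smul_mem
  apply Submodule.mem_sup_left
  by_cases h : ∀ i, α i ≤ 1
  · exact Submodule.subset_span
      ⟨monomial α 1, Submodule.subset_span ⟨α, h, rfl⟩, 1,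
        Submodule.subset_span (Or.inl rfl), (mul_one _).symm⟩
  · push_neg at h
    obtain ⟨i, hi⟩ := h
    have hi2 : 2 ≤ α i := hi
    set β := α - Finsupp.single i 2 with hβ
    have hβi : β i = α i - 2 := by simp [hβ]
    have hβj : ∀ j, j ≠ i → β j = α j := by
      intro j hj; simp [hβ, Finsupp.single_apply, Ne.symm hj]
    have hsum : β + Finsupp.single i 2 = α := by
      ext j
      by_cases hj : j = i
      · subst hj; simp [hβi]; omega
      · simp [hβj j hj, Finsupp.single_apply, Ne.symm hj]
    have hαi3 : α i ≤ 3 :=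
      le_trans (Finset.single_le_sum (fun _ _ => Nat.zero_le _) (Finset.mem_univ i)) hα
    have hβle : ∀ j, β j ≤ 1 := by
      intro j
      by_cases hj : j = i
      · subst hj; rw [hβi]; omega
      · rw [hβj j hj]
        have hpair : α i + α j ≤ ∑ k, α k := by
          have hsub := Finset.sum_le_sum_of_subset
            (s := ({i, j} : Finset (Fin n))) (t := Finset.univ)
            (f := fun k => α k) (fun x _ => Finset.mem_univ x)
          rwa [Finset.sum_pair (Ne.symm hj)] at hsub
        omega
    have heq : (monomial α (1 : ℝ) : MvPolynomial (Fin n) ℝ)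
        = monomial β 1 * X i ^ 2 := by
      rw [X_pow_eq_monomial, monomial_mul, hsum, one_mul]
    exact Submodule.subset_span
      ⟨monomial β 1, Submodule.subset_span ⟨β, hβle, rfl⟩, X i ^ 2,
        Submodule.subset_span (Or.inr ⟨i, rfl⟩), heq⟩

/-- Polynomials of total degree at most 3 lie in the Morley-type shape space. -/
theorem P3_subset_PM (n : ℕ) (hn : 1 ≤ n) (p : MvPolynomial (Fin n) ℝ)
    (hp : p.totalDegree ≤ 3) : p ∈ PM n := by
  rw [p.as_sum]
  apply Submodule.sum_mem
  intro α hαsupp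
  apply monomial_mem_PM
  have hdeg : α.sum (fun _ e => e) ≤ p.totalDegree := le_totalDegree hαsupp
  have : α.sum (fun _ e => e) = ∑ j, α j := Finsupp.sum_fintype _ _ (fun _ => rfl)
  omega
end

section
/- The dimension of the Adini-type shape function space $\mathcal{P}_A = Q_1 \cdot \operatorname{span}\{1, x_i^2, x_i^4 \mid 1\le i\le n\}$ in $n$ variables equals $2^n(2n+1)$. -/
/-!
Both factors of `PA n` are spanned by monomials, so `PA n` is spanned by the monomials whose
exponents lie in the sumset `D + T`, where `D = {α | α ≤ 1}` has `2 ^ n` elements and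
`T = {0, 2 eᵢ, 4 eᵢ}` has `2 n + 1`. Since every exponent in `D` is `0` or `1` and every exponent
in `T` is even, `d + t` determines `d` (as `(d + t) % 2`) and then `t`, so `#(D + T) = #D * #T`.
-/

open MvPolynomial

/-- Adini-type shape function space `P_A = Q1 · span{1, x_i^2, x_i^4}`. -/
noncomputable def PA (n : ℕ) : Submodule ℝ (MvPolynomial (Fin n) ℝ) :=
  prodSpan (Q1 n)
    (Submodule.span ℝ ({1} ∪ {p | ∃ i : Fin n, p = X i ^ 2 ∨ p = X i ^ 4}))

open Finset Pointwise

theorem prodSpan_eq_mul {n : ℕ} (A B : Submodule ℝ (MvPolynomial (Fin n) ℝ)) :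
    prodSpan A B = A * B := by
  rw [prodSpan, Submodule.mul_eq_span_mul_set]
  congr 1
  ext p
  simp only [Set.mem_ofPred_eq, Set.mem_mul, SetLike.mem_coe, eq_comm]

theorem finrank_restrictSupport {σ R : Type*} [CommRing R] [StrongRankCondition R]
    (s : Finset (σ →₀ ℕ)) : Module.finrank R (restrictSupport R (s : Set (σ →₀ ℕ))) = #s := by
  rw [Module.finrank_eq_card_basis (basisRestrictSupport R _)]
  simp

theorem card_add_of_le_one_of_two_dvd {σ : Type*} [DecidableEq σ] (D T : Finset (σ →₀ ℕ))
    (hD : ∀ d ∈ D, ∀ i, d i ≤ 1) (hT : ∀ t ∈ T, ∀ i, 2 ∣ t i) : #(D + T) = #D * #T := by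
  rw [card_add_iff]
  rintro ⟨d, t⟩ ⟨hd, ht⟩ ⟨d', t'⟩ ⟨hd', ht'⟩ h
  have hcoord : ∀ i, d i = d' i ∧ t i = t' i := fun i => by
    have hi : d i + t i = d' i + t' i := DFunLike.congr_fun h i
    have := hD d hd i; have := hD d' hd' i; have := hT t ht i; have := hT t' ht' i
    omega
  exact Prod.ext (Finsupp.ext fun i => (hcoord i).1) (Finsupp.ext fun i => (hcoord i).2)

section Exponents

variable (σ : Type*) [Fintype σ] [DecidableEq σ]

noncomputable def multilinearExps : Finset (σ →₀ ℕ) :=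
  Iic (Finsupp.equivFunOnFinite.symm 1)

noncomputable def evenPowerExps : Finset (σ →₀ ℕ) :=
  insert 0 ((univ ×ˢ {2, 4}).image fun p => Finsupp.single p.1 p.2)

variable {σ}

theorem mem_multilinearExps {α : σ →₀ ℕ} : α ∈ multilinearExps σ ↔ ∀ i, α i ≤ 1 := by
  simp [multilinearExps, Finsupp.le_def]

theorem two_dvd_of_mem_evenPowerExps {t : σ →₀ ℕ} (ht : t ∈ evenPowerExps σ) (i : σ) :
    2 ∣ t i := by
  simp only [evenPowerExps, mem_insert, mem_image, mem_product, mem_univ, true_and,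
    mem_singleton] at ht
  rcases ht with rfl | ⟨⟨j, k⟩, hk, rfl⟩
  · simp
  · rw [Finsupp.single_apply]
    split_ifs <;> rcases hk with rfl | rfl <;> norm_num

variable (σ)

theorem card_multilinearExps : #(multilinearExps σ) = 2 ^ Fintype.card σ := by
  rw [multilinearExps, Finsupp.card_Iic]
  simp

theorem card_evenPowerExps : #(evenPowerExps σ) = 2 * Fintype.card σ + 1 := by
  rw [evenPowerExps, card_insert_of_notMem, card_image_of_injOn]
  · simp [mul_comm]
  · rintro ⟨i, k⟩ hk ⟨j, l⟩ hl h
    simp only [coe_product, coe_univ, Set.mem_prod, Set.mem_univ, true_and, coe_insert,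
      coe_singleton, Set.mem_insert_iff, Set.mem_singleton_iff] at hk hl
    rcases (Finsupp.single_eq_single_iff _ _ _ _).1 h with ⟨rfl, rfl⟩ | ⟨rfl, -⟩
    · rfl
    · omega
  · simp

end Exponents

theorem Q1_eq_restrictSupport (n : ℕ) :
    Q1 n = restrictSupport ℝ (multilinearExps (Fin n) : Set (Fin n →₀ ℕ)) := by
  rw [Q1, restrictSupport_eq_span]
  congr 1
  ext p
  simp [mem_multilinearExps, eq_comm]

theorem span_one_X_sq_X_pow_four_eq_restrictSupport (n : ℕ) :
    Submodule.span ℝ ({1} ∪ {p | ∃ i : Fin n, p = X i ^ 2 ∨ p = X i ^ 4}) =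
      restrictSupport ℝ (evenPowerExps (Fin n) : Set (Fin n →₀ ℕ)) := by
  rw [restrictSupport_eq_span]
  congr 1
  ext p
  simp only [evenPowerExps, X_pow_eq_monomial]
  aesop

theorem finrank_PA_general (n : ℕ) :
    Module.finrank ℝ ↥(PA n) = 2 ^ n * (2 * n + 1) := by
  rw [PA, prodSpan_eq_mul, Q1_eq_restrictSupport, span_one_X_sq_X_pow_four_eq_restrictSupport,
    ← restrictSupport_add, ← Finset.coe_add, finrank_restrictSupport,
    card_add_of_le_one_of_two_dvd _ _ (fun _ hd => mem_multilinearExps.1 hd)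
      (fun _ => two_dvd_of_mem_evenPowerExps),
    card_multilinearExps, card_evenPowerExps, Fintype.card_fin]

/-- The dimension of the Adini-type shape space equals `2^n (2n+1)`. -/
theorem finrank_PA (n : ℕ) (hn : 1 ≤ n) :
    Module.finrank ℝ ↥(PA n) = 2 ^ n * (2 * n + 1) :=
  finrank_PA_general n
end

section
/- Unisolvency of the $n$-dimensional Adini-type element: if $v \in \mathcal{P}_A$ satisfies $v(a) = 0$, $\partial_j v(a) = 0$ for all $1 \le j \le n$, and $\partial_j^2 v(a) = 0$ for all $1 \le j \le n$, at every vertex $a \in \{-1,1\}^n$ of the unit cube $[-1,1]^n$, then $v = 0$. -/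
/-!
Write `v = q + ∑ᵢ (xᵢ² pᵢ + xᵢ⁴ rᵢ)` with `q, pᵢ, rᵢ ∈ Q₁`. A multilinear polynomial vanishing at
every vertex is zero (combinatorial Nullstellensatz), and `xᵢ² = xᵢ⁴ = 1` at the vertices.
The values then give `q + ∑ᵢ (pᵢ + rᵢ) = 0`; differentiating this identity, the first derivatives
give `pⱼ + 2 rⱼ = 0`; since `∂ⱼ²` kills multilinear polynomials, the pure second derivatives
reduce to `8 rⱼ` at the vertices. So every `rⱼ`, then every `pⱼ`, then `q` vanishes.
-/

open MvPolynomial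

lemma ofNat_mul_mem {A S : Type*} [NonAssocSemiring A] [SetLike S A] [AddSubmonoidClass S A]
    {s : S} (k : ℕ) [k.AtLeastTwo] {x : A} (hx : x ∈ s) : (ofNat(k) : A) * x ∈ s := by
  rw [← Nat.cast_ofNat, ← nsmul_eq_mul]
  exact nsmul_mem hx _

lemma Submodule.exists_sum_mul_of_mem_iSup_map_mulLeft {R A ι : Type*} [CommSemiring R]
    [Semiring A] [Algebra R A] [Fintype ι] (S : Submodule R A) (g : ι → A) {y : A}
    (hy : y ∈ ⨆ i, S.map (LinearMap.mulLeft R (g i))) :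
    ∃ p : ι → A, (∀ i, p i ∈ S) ∧ y = ∑ i, g i * p i := by
  obtain ⟨f, hf, rfl⟩ := (mem_iSup_iff_exists_finsupp _ y).mp hy
  choose p hpS hp using fun i => mem_map.mp (hf i)
  exact ⟨p, hpS, by simp [Finsupp.sum_fintype, ← hp]⟩

section AdiniForm

variable {R σ : Type*} [CommRing R]

lemma MvPolynomial.pderiv_ofNat (i : σ) (k : ℕ) [k.AtLeastTwo] :
    pderiv i (ofNat(k) : MvPolynomial σ R) = 0 := by
  rw [← Nat.cast_ofNat]
  exact (pderiv i).map_natCast k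

variable [Fintype σ]

noncomputable def adiniForm (q : MvPolynomial σ R) (p r : σ → MvPolynomial σ R) :
    MvPolynomial σ R :=
  q + ∑ i, (X i ^ 2 * p i + X i ^ 4 * r i)

lemma adiniForm_zero : adiniForm (0 : MvPolynomial σ R) 0 0 = 0 := by
  simp [adiniForm]

lemma eval_adiniForm_of_sq_eq_one {a : σ → R} (ha : ∀ i, a i ^ 2 = 1)
    (q : MvPolynomial σ R) (p r : σ → MvPolynomial σ R) :
    eval a (adiniForm q p r) = eval a (q + ∑ i, (p i + r i)) := by
  have ha4 : ∀ i, a i ^ 4 = 1 := fun i => by rw [show 4 = 2 * 2 from rfl, pow_mul, ha, one_pow]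
  simp [adiniForm, ha, ha4]

variable [DecidableEq σ]

lemma pderiv_adiniForm (j : σ) (q : MvPolynomial σ R) (p r : σ → MvPolynomial σ R) :
    pderiv j (adiniForm q p r) = adiniForm (pderiv j q) (pderiv j ∘ p) (pderiv j ∘ r)
      + X j * (2 * p j + 4 * X j ^ 2 * r j) := by
  have hterm : ∀ i, pderiv j (X i ^ 2 * p i + X i ^ 4 * r i)
      = X i ^ 2 * pderiv j (p i) + X i ^ 4 * pderiv j (r i)
        + if i = j then X j * (2 * p j + 4 * X j ^ 2 * r j) else 0 := by
    intro i
    split_ifs with h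
    · subst h
      simp only [map_add, pderiv_mul, pderiv_pow, pderiv_X_self]
      ring
    · simp [pderiv_X_of_ne h]
  rw [adiniForm, adiniForm, map_add, map_sum, Finset.sum_congr rfl fun i _ => hterm i,
    Finset.sum_add_distrib, Finset.sum_ite_eq', if_pos (Finset.mem_univ j)]
  simp only [Function.comp_apply]
  ring

lemma pderiv_pderiv_adiniForm (j : σ) (q : MvPolynomial σ R) (p r : σ → MvPolynomial σ R) :
    pderiv j (pderiv j (adiniForm q p r))
      = adiniForm (pderiv j (pderiv j q)) (pderiv j ∘ pderiv j ∘ p) (pderiv j ∘ pderiv j ∘ r)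
        + (2 * p j + 12 * X j ^ 2 * r j
          + X j * (4 * pderiv j (p j) + 8 * X j ^ 2 * pderiv j (r j))) := by
  rw [pderiv_adiniForm, map_add, pderiv_adiniForm]
  simp only [Function.comp_apply, map_add, pderiv_mul, pderiv_pow, pderiv_X_self, pderiv_ofNat]
  ring

variable {a : σ → R} {q : MvPolynomial σ R} {p r : σ → MvPolynomial σ R}

lemma eval_pderiv_adiniForm_of_sq_eq_one (ha : ∀ i, a i ^ 2 = 1)
    (hw : q + ∑ i, (p i + r i) = 0) (j : σ) :
    eval a (pderiv j (adiniForm q p r)) = 2 * a j * eval a (p j + 2 * r j) := by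
  have hdw : pderiv j q + ∑ i, ((pderiv j ∘ p) i + (pderiv j ∘ r) i) = 0 := by
    simpa [map_sum] using congrArg (pderiv j) hw
  rw [pderiv_adiniForm, map_add, eval_adiniForm_of_sq_eq_one ha, hdw]
  simp only [map_add, map_mul, map_pow, map_zero, map_ofNat, eval_X, ha, mul_one, zero_add]
  ring

lemma eval_pderiv_pderiv_adiniForm_of_sq_eq_one (ha : ∀ i, a i ^ 2 = 1) (j : σ)
    (hq : pderiv j (pderiv j q) = 0)
    (hp : ∀ i, pderiv j (pderiv j (p i)) = 0) (hr : ∀ i, pderiv j (pderiv j (r i)) = 0)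
    (hpr : p j + 2 * r j = 0) :
    eval a (pderiv j (pderiv j (adiniForm q p r))) = 8 * eval a (r j) := by
  have hdpr : pderiv j (p j) + 2 * pderiv j (r j) = 0 := by
    simpa [pderiv_ofNat] using congrArg (pderiv j) hpr
  have hcomp : ∀ f : σ → MvPolynomial σ R, (∀ i, pderiv j (pderiv j (f i)) = 0) →
      pderiv j ∘ pderiv j ∘ f = 0 := fun f hf => funext hf
  rw [pderiv_pderiv_adiniForm, hq, hcomp p hp, hcomp r hr, adiniForm_zero, zero_add]
  have e := congrArg (eval a) hpr
  have de := congrArg (eval a) hdpr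
  simp only [map_add, map_mul, map_pow, map_ofNat, eval_X, map_zero, ha] at e de ⊢
  linear_combination 2 * e + 4 * a j * de

end AdiniForm

section Adini

variable {n : ℕ}

lemma le_one_of_mem_support_of_mem_Q1 {q : MvPolynomial (Fin n) ℝ} (hq : q ∈ Q1 n) :
    ∀ α ∈ q.support, ∀ i, α i ≤ 1 := by
  induction hq using Submodule.span_induction with
  | mem x hx =>
    obtain ⟨α, hα, rfl⟩ := hx
    intro β hβ
    rw [support_monomial, if_neg one_ne_zero, Finset.mem_singleton] at hβ
    exact hβ ▸ hα
  | zero => simp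
  | add x y _ _ hx hy =>
    intro β hβ
    exact (Finset.mem_union.mp (support_add hβ)).elim (hx β) (hy β)
  | smul c x _ hx => exact fun β hβ => hx β (support_smul hβ)

lemma eq_zero_of_mem_Q1_of_eval_vertex {q : MvPolynomial (Fin n) ℝ} (hq : q ∈ Q1 n)
    (hvert : ∀ a : Fin n → ℝ, (∀ i, a i = 1 ∨ a i = -1) → eval a q = 0) : q = 0 := by
  refine eq_zero_of_eval_zero_at_prod_finset q (fun _ => {1, -1}) (fun i => ?_) fun a ha => ?_
  · rw [Finset.card_pair (by norm_num), degreeOf_lt_iff two_pos]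
    exact fun α hα => Nat.lt_succ_of_le (le_one_of_mem_support_of_mem_Q1 hq α hα i)
  · exact hvert a fun i => by simpa using ha i

lemma pderiv_pderiv_eq_zero_of_mem_Q1 {q : MvPolynomial (Fin n) ℝ} (hq : q ∈ Q1 n)
    (j : Fin n) : pderiv j (pderiv j q) = 0 := by
  induction hq using Submodule.span_induction with
  | mem x hx =>
    obtain ⟨α, hα, rfl⟩ := hx
    have hαj := hα j
    simp only [pderiv_monomial, one_mul, Finsupp.coe_tsub, Pi.sub_apply, Finsupp.single_eq_same,
      monomial_eq_zero, mul_eq_zero, Nat.cast_eq_zero]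
    omega
  | zero => simp
  | add x y _ _ hx hy => simp [hx, hy]
  | smul c x _ hx => simp [hx]

noncomputable def adiniSpace (n : ℕ) : Submodule ℝ (MvPolynomial (Fin n) ℝ) :=
  Q1 n ⊔ (⨆ i, (Q1 n).map (LinearMap.mulLeft ℝ (X i ^ 2))) ⊔
    ⨆ i, (Q1 n).map (LinearMap.mulLeft ℝ (X i ^ 4))

lemma PA_le_adiniSpace : PA n ≤ adiniSpace n := by
  refine Submodule.span_le.mpr ?_
  rintro _ ⟨a, ha, b, hb, rfl⟩
  suffices h : _ ≤ (adiniSpace n).comap (LinearMap.mulLeft ℝ a) from h hb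
  refine Submodule.span_le.mpr ?_
  rintro _ (rfl | ⟨i, rfl | rfl⟩) <;> simp only [SetLike.mem_coe, Submodule.mem_comap,
    LinearMap.mulLeft_apply]
  · exact Submodule.mem_sup_left (Submodule.mem_sup_left (by simpa using ha))
  · refine Submodule.mem_sup_left (Submodule.mem_sup_right (Submodule.mem_iSup_of_mem i ?_))
    exact mul_comm (X i ^ 2) a ▸ Submodule.mem_map_of_mem ha
  · refine Submodule.mem_sup_right (Submodule.mem_iSup_of_mem i ?_)
    exact mul_comm (X i ^ 4) a ▸ Submodule.mem_map_of_mem ha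

lemma exists_adiniForm_of_mem_PA {v : MvPolynomial (Fin n) ℝ} (hv : v ∈ PA n) :
    ∃ q p r, q ∈ Q1 n ∧ (∀ i, p i ∈ Q1 n) ∧ (∀ i, r i ∈ Q1 n) ∧ v = adiniForm q p r := by
  obtain ⟨y, hy, s, hs, rfl⟩ := Submodule.mem_sup.mp (PA_le_adiniSpace hv)
  obtain ⟨q, hq, t, ht, rfl⟩ := Submodule.mem_sup.mp hy
  obtain ⟨p, hp, rfl⟩ := Submodule.exists_sum_mul_of_mem_iSup_map_mulLeft _ _ ht
  obtain ⟨r, hr, rfl⟩ := Submodule.exists_sum_mul_of_mem_iSup_map_mulLeft _ _ hs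
  exact ⟨q, p, r, hq, hp, hr, by rw [adiniForm, Finset.sum_add_distrib, add_assoc]⟩

end Adini

theorem adini_unisolvent_general (n : ℕ) (v : MvPolynomial (Fin n) ℝ)
    (hv : v ∈ PA n)
    (hval : ∀ a : Fin n → ℝ, (∀ i, a i = 1 ∨ a i = -1) → eval a v = 0)
    (hder : ∀ a : Fin n → ℝ, (∀ i, a i = 1 ∨ a i = -1) →
      ∀ j : Fin n, eval a (pderiv j v) = 0)
    (hder2 : ∀ a : Fin n → ℝ, (∀ i, a i = 1 ∨ a i = -1) →
      ∀ j : Fin n, eval a (pderiv j (pderiv j v)) = 0) :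
    v = 0 := by
  obtain ⟨q, p, r, hq, hp, hr, rfl⟩ := exists_adiniForm_of_mem_PA hv
  have hsq : ∀ a : Fin n → ℝ, (∀ i, a i = 1 ∨ a i = -1) → ∀ i, a i ^ 2 = 1 :=
    fun a ha i => by rcases ha i with h | h <;> simp [h]
  have hdd {f : MvPolynomial (Fin n) ℝ} (hf : f ∈ Q1 n) (j : Fin n) :=
    pderiv_pderiv_eq_zero_of_mem_Q1 hf j
  have hw : q + ∑ i, (p i + r i) = 0 :=
    eq_zero_of_mem_Q1_of_eval_vertex
      (add_mem hq (sum_mem fun i _ => add_mem (hp i) (hr i))) fun a ha => by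
        rw [← eval_adiniForm_of_sq_eq_one (hsq a ha)]
        exact hval a ha
  have hpr : ∀ j, p j + 2 * r j = 0 := fun j =>
    eq_zero_of_mem_Q1_of_eval_vertex (add_mem (hp j) (ofNat_mul_mem 2 (hr j))) fun a ha => by
      have h := hder a ha j
      rw [eval_pderiv_adiniForm_of_sq_eq_one (hsq a ha) hw] at h
      have haj : 2 * a j ≠ 0 := by rcases ha j with h | h <;> simp [h]
      exact (mul_eq_zero.mp h).resolve_left haj
  have hr0 : r = 0 := funext fun j =>
    eq_zero_of_mem_Q1_of_eval_vertex (hr j) fun a ha => by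
      have h := hder2 a ha j
      rw [eval_pderiv_pderiv_adiniForm_of_sq_eq_one (hsq a ha) j (hdd hq j)
        (fun i => hdd (hp i) j) (fun i => hdd (hr i) j) (hpr j)] at h
      linarith
  have hp0 : p = 0 := funext fun j => by simpa [hr0] using hpr j
  have hq0 : q = 0 := by simpa [hp0, hr0] using hw
  rw [hq0, hp0, hr0, adiniForm_zero]

/-- Unisolvency of the `n`-dimensional Adini-type element: if `v ∈ P_A` and the value,
all first partial derivatives and all pure second derivatives of `v` vanish at every
vertex of the cube `[-1,1]^n`, then `v = 0`. -/
theorem adini_unisolvent (n : ℕ) (hn : 1 ≤ n) (v : MvPolynomial (Fin n) ℝ)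
    (hv : v ∈ PA n)
    (hval : ∀ a : Fin n → ℝ, (∀ i, a i = 1 ∨ a i = -1) → eval a v = 0)
    (hder : ∀ a : Fin n → ℝ, (∀ i, a i = 1 ∨ a i = -1) →
      ∀ j : Fin n, eval a (pderiv j v) = 0)
    (hder2 : ∀ a : Fin n → ℝ, (∀ i, a i = 1 ∨ a i = -1) →
      ∀ j : Fin n, eval a (pderiv j (pderiv j v)) = 0) :
    v = 0 :=
  adini_unisolvent_general n v hv hval hder hder2
end

section
/- The Morley-type vertex basis function satisfies: for $p_{0i}(\xi) = \frac{1}{2^{n+1}}\big(2 + \sum_{k=1}^n(\xi_{ik}\xi_k - \xi_k^2)\big)\prod_{k=1}^n(1+\xi_{ik}\xi_k) + \frac{3}{2^{n+3}}\sum_{k=1}^n \xi_{ik}\xi_k(\xi_k^2-1)^2$, the restriction of its second derivative in $\xi_k$ to the face $\xi_k = \pm 1$ equals $\mp\frac{3}{2^n}\xi_{ik}\prod_{j\ne k}(1+\xi_{ij}\xi_j) \pm \frac{3}{2^n}\xi_{ik}$, and hence its integral over the face $[-1,1]^{n-1}$ is zero. -/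
/-!
Along the line `t ↦ Function.update ξ k t`, `p_{0i}` is a quintic polynomial in `t` whose
coefficients see the other coordinates only through `∏_{j ≠ k} (1 + ε_j ξ_j)` and two sums;
differentiating it twice and using `ε_k² = σ² = 1` gives the formula on the face. Over the cube
every factor `1 + c ξ_j` integrates to `2`, exactly as the constant `1` does, so the two terms of
the face formula integrate to `∓ (3 / 2^n) ε_k · 2^n` and cancel.
-/

open MeasureTheory Set Polynomial

@[to_additive]
theorem Fintype.prod_apply_update {ι α M : Type*} [Fintype ι] [DecidableEq ι] [CommMonoid M]
    (g : ι → α → M) (x : ι → α) (k : ι) (t : α) :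
    ∏ j, g j (Function.update x k t j) = g k t * ∏ j ∈ Finset.univ.erase k, g j (x j) := by
  rw [← Finset.mul_prod_erase _ _ (Finset.mem_univ k), Function.update_self]
  congr 1
  exact Finset.prod_congr rfl fun j hj => by
    rw [Function.update_of_ne (Finset.ne_of_mem_erase hj)]

theorem deriv_deriv_polynomial_eval (P : ℝ[X]) (x : ℝ) :
    deriv (deriv fun t => P.eval t) x = (derivative (derivative P)).eval x := by
  simp only [Polynomial.deriv, funext fun t => Polynomial.deriv (p := P) (x := t)]

noncomputable def morleyVertex {n : ℕ} (ε ξ : Fin n → ℝ) : ℝ :=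
  (1 / 2 ^ (n + 1)) * (2 + ∑ j, (ε j * ξ j - ξ j ^ 2)) * ∏ j, (1 + ε j * ξ j)
    + (3 / 2 ^ (n + 3)) * ∑ j, ε j * ξ j * (ξ j ^ 2 - 1) ^ 2

theorem deriv_deriv_morleyVertex_update {n : ℕ} {ε : Fin n → ℝ} {k : Fin n} {σ : ℝ}
    (hε : ε k ^ 2 = 1) (hσ : σ ^ 2 = 1) (ξ : Fin n → ℝ) :
    deriv (deriv fun t => morleyVertex ε (Function.update ξ k t)) σ =
      -σ * (3 / 2 ^ n) * ε k * ∏ j ∈ Finset.univ.erase k, (1 + ε j * ξ j)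
        + σ * (3 / 2 ^ n) * ε k := by
  set P := ∏ j ∈ Finset.univ.erase k, (1 + ε j * ξ j)
  set S := ∑ j ∈ Finset.univ.erase k, (ε j * ξ j - ξ j ^ 2)
  set B := ∑ j ∈ Finset.univ.erase k, ε j * ξ j * (ξ j ^ 2 - 1) ^ 2
  have hline : (fun t => morleyVertex ε (Function.update ξ k t)) = fun t =>
      eval t (C (P / 2 ^ (n + 1)) * (C (2 + S) + C (ε k) * X - X ^ 2) * (1 + C (ε k) * X)
        + C (3 / 2 ^ (n + 3)) * (C (ε k) * X * (X ^ 2 - 1) ^ 2 + C B)) := by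
    funext t
    rw [morleyVertex, Fintype.sum_apply_update (fun j x => ε j * x - x ^ 2),
      Fintype.prod_apply_update (fun j x => 1 + ε j * x),
      Fintype.sum_apply_update (fun j x => ε j * x * (x ^ 2 - 1) ^ 2)]
    simp only [eval_add, eval_sub, eval_mul, eval_pow, eval_C, eval_X, eval_one]
    ring
  rw [hline, deriv_deriv_polynomial_eval]
  simp only [map_add, derivative_mul, derivative_C, zero_mul, derivative_sub,
    add_zero, derivative_X, mul_one, zero_add, derivative_pow, Nat.cast_ofNat,
    Nat.add_one_sub_one, pow_one, derivative_one, sub_zero, zero_sub, mul_neg, neg_mul, mul_zero,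
    eval_add, eval_neg, eval_mul, eval_C, eval_one, eval_X, eval_sub, eval_pow]
  linear_combination (2 * P / 2 ^ (n + 1)) * hε + (60 * ε k * σ / 2 ^ (n + 3)) * hσ

theorem volume_real_cube {ι : Type*} [Fintype ι] :
    volume.real (univ.pi fun _ : ι => Icc (-1 : ℝ) 1) = 2 ^ Fintype.card ι := by
  rw [measureReal_def, volume_pi_pi]
  simp [Real.volume_Icc]
  norm_num

theorem integral_Icc_one_add_mul (c : ℝ) : ∫ x in Icc (-1 : ℝ) 1, (1 + c * x) = 2 := by
  rw [integral_Icc_eq_integral_Ioc, ← intervalIntegral.integral_of_le (by norm_num),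
    intervalIntegral.integral_add intervalIntegrable_const
      (intervalIntegral.intervalIntegrable_id.const_mul c),
    intervalIntegral.integral_const_mul, integral_id]
  norm_num

theorem integral_cube_prod_one_add_mul {ι : Type*} [Fintype ι] (s : Finset ι) (c : ι → ℝ) :
    ∫ ξ in univ.pi (fun _ : ι => Icc (-1 : ℝ) 1), ∏ j ∈ s, (1 + c j * ξ j) =
      2 ^ Fintype.card ι := by
  classical
  have hfactor : ∀ j, ∫ x in Icc (-1 : ℝ) 1, (if j ∈ s then 1 + c j * x else 1) = 2 := by
    intro j
    split_ifs
    · exact integral_Icc_one_add_mul _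
    · simpa using integral_Icc_one_add_mul 0
  simp_rw [← Fintype.prod_extend_by_one s]
  rw [volume_pi, Measure.restrict_pi_pi,
    integral_fintype_prod_eq_prod (fun j x => if j ∈ s then 1 + c j * x else 1)]
  simp [hfactor]

theorem integral_cube_mul_prod_add {ι : Type*} [Fintype ι] (s : Finset ι) (c : ι → ℝ)
    (a b : ℝ) :
    ∫ ξ in univ.pi (fun _ : ι => Icc (-1 : ℝ) 1), (a * ∏ j ∈ s, (1 + c j * ξ j) + b) =
      (a + b) * 2 ^ Fintype.card ι := by
  have hcube : IsCompact (univ.pi fun _ : ι => Icc (-1 : ℝ) 1) :=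
    isCompact_univ_pi fun _ => isCompact_Icc
  rw [integral_add ((by fun_prop : Continuous _).continuousOn.integrableOn_compact hcube)
      (continuousOn_const.integrableOn_compact hcube),
    integral_const_mul, integral_cube_prod_one_add_mul, setIntegral_const, volume_real_cube,
    smul_eq_mul]
  ring

theorem morley_p0_second_normal_derivative_general (n : ℕ)
    (ε : Fin n → ℝ) (hε : ∀ i, ε i = 1 ∨ ε i = -1)
    (k : Fin n) (σ : ℝ) (hσ : σ = 1 ∨ σ = -1)
    (p : (Fin n → ℝ) → ℝ)
    (hp : ∀ ξ, p ξ =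
      (1 / 2 ^ (n + 1)) * (2 + ∑ j, (ε j * ξ j - ξ j ^ 2)) * ∏ j, (1 + ε j * ξ j)
        + (3 / 2 ^ (n + 3)) * ∑ j, ε j * ξ j * (ξ j ^ 2 - 1) ^ 2) :
    (∀ ξ : Fin n → ℝ,
      deriv (deriv (fun t => p (Function.update ξ k t))) σ =
        -σ * (3 / 2 ^ n) * ε k * ∏ j ∈ Finset.univ.erase k, (1 + ε j * ξ j)
          + σ * (3 / 2 ^ n) * ε k) ∧
    ∫ ξ in (Set.univ.pi fun _ : Fin n => Set.Icc (-1 : ℝ) 1),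
      deriv (deriv (fun t => p (Function.update ξ k t))) σ = 0 := by
  obtain rfl : p = morleyVertex ε := funext hp
  have hε2 : ε k ^ 2 = 1 := by rcases hε k with h | h <;> simp [h]
  have hσ2 : σ ^ 2 = 1 := by rcases hσ with rfl | rfl <;> norm_num
  have hface := deriv_deriv_morleyVertex_update hε2 hσ2
  refine ⟨hface, ?_⟩
  simp_rw [hface]
  rw [integral_cube_mul_prod_add]
  ring

/-- The Morley-type vertex basis function
`p_{0i}(ξ) = 2^{-(n+1)} (2 + Σ_k (ε_k ξ_k - ξ_k²)) Π_k (1+ε_k ξ_k)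
            + 3·2^{-(n+3)} Σ_k ε_k ξ_k (ξ_k²-1)²`
(with sign vector `ε ∈ {-1,1}^n`) has the property that on the face `ξ_k = σ`
(`σ = ±1`) its second derivative in `ξ_k` equals
`-σ (3/2^n) ε_k Π_{j≠k}(1+ε_j ξ_j) + σ (3/2^n) ε_k`, and hence the integral of this
second derivative over the face vanishes. -/
theorem morley_p0_second_normal_derivative (n : ℕ) (hn : 2 ≤ n)
    (ε : Fin n → ℝ) (hε : ∀ i, ε i = 1 ∨ ε i = -1)
    (k : Fin n) (σ : ℝ) (hσ : σ = 1 ∨ σ = -1)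
    (p : (Fin n → ℝ) → ℝ)
    (hp : ∀ ξ, p ξ =
      (1 / 2 ^ (n + 1)) * (2 + ∑ j, (ε j * ξ j - ξ j ^ 2)) * ∏ j, (1 + ε j * ξ j)
        + (3 / 2 ^ (n + 3)) * ∑ j, ε j * ξ j * (ξ j ^ 2 - 1) ^ 2) :
    (∀ ξ : Fin n → ℝ,
      deriv (deriv (fun t => p (Function.update ξ k t))) σ =
        -σ * (3 / 2 ^ n) * ε k * ∏ j ∈ Finset.univ.erase k, (1 + ε j * ξ j)
          + σ * (3 / 2 ^ n) * ε k) ∧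
    ∫ ξ in (Set.univ.pi fun _ : Fin n => Set.Icc (-1 : ℝ) 1),
      deriv (deriv (fun t => p (Function.update ξ k t))) σ = 0 :=
  morley_p0_second_normal_derivative_general n ε hε k σ hσ p hp
end
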